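/- arXiv:1909.09030 — 3 statements merged into one kernel-verified Lean document; each statement's English description precedes it below -/
import Mathlib

section
/- Let U be a universe of separations and let r, s ∈ U be two crossing separations. Then every separation t ∈ U that is nested with both r and s is also nested with all four corner separations of r and s. -/
/-!
In a universe of separations, every separation `t` that is nested with both of
two crossing separations `r` and `s` is also nested with all four corner
separations of `r` and `s`.
-/

variable {U : Type*}

/-- `star` is an order-reversing involution: `s** = s` and `r ≤ s ↔ s* ≤ r*`. -/
def OrderReversingInvolution [Lattice U] (star : U → U) : Prop :=
  (∀ s : U, star (star s) = s) ∧ ∀ r s : U, r ≤ s ↔ star s ≤ star r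

/-- Two separations are nested if they have comparable orientations. -/
def Nested [Lattice U] (star : U → U) (r s : U) : Prop :=
  r ≤ s ∨ r ≤ star s ∨ star r ≤ s ∨ star r ≤ star s

/-- Two separations cross if they are not nested. -/
def Crosses [Lattice U] (star : U → U) (r s : U) : Prop := ¬ Nested star r s

/-- `c` is a corner separation of `r` and `s`: a join of orientations of `r`
and `s`, or the involution of such a join. -/
def IsCornerSep [Lattice U] (star : U → U) (c r s : U) : Prop :=
  ∃ r' s', (r' = r ∨ r' = star r) ∧ (s' = s ∨ s' = star s) ∧
    (c = r' ⊔ s' ∨ c = star (r' ⊔ s'))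


/-
Written `t ≤ a ∨ a ≤ t ∨ t* ≤ a ∨ a ≤ t*`, nestedness says that `a` is comparable
with `t` or with `t*`. If `t` or `t*` lies below `a` or `b`, it lies below `a ⊔ b`.
Otherwise each of `a`, `b` lies below `t` or `t*`; if both lie below the same one,
so does `a ⊔ b`, and a mixed case such as `a ≤ t ≤ b*` would nest the two
orientations `a` and `b` of `r` and `s`, contradicting that `r` and `s` cross.
-/

section

variable [Lattice U] {star : U → U}

lemma nested_star_left_iff (hinv : Function.Involutive star) {a b : U} :
    Nested star (star a) b ↔ Nested star a b := by
  unfold Nested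
  rw [hinv a]
  tauto

lemma nested_star_right_iff (hinv : Function.Involutive star) {a b : U} :
    Nested star a (star b) ↔ Nested star a b := by
  unfold Nested
  rw [hinv b]
  tauto

lemma nested_left_iff_of_orientation (hinv : Function.Involutive star) {a a' b : U}
    (ha' : a' = a ∨ a' = star a) : Nested star a' b ↔ Nested star a b := by
  rcases ha' with rfl | rfl
  exacts [Iff.rfl, nested_star_left_iff hinv]

lemma nested_right_iff_of_orientation (hinv : Function.Involutive star) {a b b' : U}
    (hb' : b' = b ∨ b' = star b) : Nested star a b' ↔ Nested star a b := by
  rcases hb' with rfl | rfl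
  exacts [Iff.rfl, nested_star_right_iff hinv]

lemma OrderReversingInvolution.le_star_comm (h : OrderReversingInvolution star) {a b : U} :
    a ≤ star b ↔ b ≤ star a := by
  rw [h.2 a, h.1]

lemma OrderReversingInvolution.star_le_star (h : OrderReversingInvolution star) {a b : U} :
    star a ≤ star b ↔ b ≤ a :=
  (h.2 b a).symm

lemma OrderReversingInvolution.nested_iff (h : OrderReversingInvolution star) {t a : U} :
    Nested star t a ↔ (t ≤ a ∨ a ≤ t) ∨ (star t ≤ a ∨ a ≤ star t) := by
  unfold Nested
  rw [h.le_star_comm, h.star_le_star]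
  tauto

lemma OrderReversingInvolution.nested_sup (h : OrderReversingInvolution star) {t a b : U}
    (hab : ¬ a ≤ star b) (ha : Nested star t a) (hb : Nested star t b) :
    Nested star t (a ⊔ b) := by
  rw [h.nested_iff] at ha hb ⊢
  rcases ha with (hta | hat) | (hta | hat)
  · exact Or.inl (Or.inl (hta.trans le_sup_left))
  · rcases hb with (htb | hbt) | (htb | hbt)
    · exact Or.inl (Or.inl (htb.trans le_sup_right))
    · exact Or.inl (Or.inr (sup_le hat hbt))
    · exact Or.inr (Or.inl (htb.trans le_sup_right))
    · exact absurd (hat.trans (h.le_star_comm.1 hbt)) hab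
  · exact Or.inr (Or.inl (hta.trans le_sup_left))
  · rcases hb with (htb | hbt) | (htb | hbt)
    · exact Or.inl (Or.inl (htb.trans le_sup_right))
    · exact absurd (h.le_star_comm.1 (hbt.trans (h.le_star_comm.1 hat))) hab
    · exact Or.inr (Or.inl (htb.trans le_sup_right))
    · exact Or.inr (Or.inr (sup_le hat hbt))

end

theorem nested_with_corners_general [Lattice U] (star : U → U)
    (hstar : OrderReversingInvolution star) (r s : U)
    (hcross : Crosses star r s) (t : U)
    (htr : Nested star t r) (hts : Nested star t s) :
    ∀ c, IsCornerSep star c r s → Nested star t c := by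
  rintro c ⟨r', s', hr', hs', hc⟩
  have hinv : Function.Involutive star := hstar.1
  have hr's' : ¬ r' ≤ star s' := fun hle => hcross <| by
    rw [← nested_left_iff_of_orientation hinv hr', ← nested_right_iff_of_orientation hinv hs']
    exact Or.inr (Or.inl hle)
  have hcorner : Nested star t (r' ⊔ s') :=
    hstar.nested_sup hr's' ((nested_right_iff_of_orientation hinv hr').2 htr)
      ((nested_right_iff_of_orientation hinv hs').2 hts)
  exact (nested_right_iff_of_orientation hinv hc).2 hcorner

/-- If `t` is nested with both of the crossing separations `r` and `s`, then
`t` is nested with all four corner separations of `r` and `s`. -/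
theorem nested_with_corners [Lattice U] [Fintype U] (star : U → U)
    (hstar : OrderReversingInvolution star) (r s : U)
    (hcross : Crosses star r s) (t : U)
    (htr : Nested star t r) (hts : Nested star t s) :
    ∀ c, IsCornerSep star c r s → Nested star t c :=
  nested_with_corners_general star hstar r s hcross t htr hts
end

section
/- Let G be a finite graph and, for every pair {P, P'} of distinct maximal tangles of G, let A_{P,P'} be the set of all separations of G that distinguish P and P' efficiently. Then the family of all these sets A_{P,P'} splinters in the universe of separations of G. -/
/-!
Let `r` distinguish `P, P'` and `s` distinguish `Q, Q'` efficiently, with `|r| ≤ |s|`, and suppose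
`r` is not an efficient distinguisher of `Q, Q'`. Then `Q` and `Q'` orient `r` alike, say as `r`;
orient `s` as `s ∈ Q`, `s* ∈ Q'`. If a corner `r ∨ s` or `r ∨ s*` has order at most `|s|`, it
distinguishes `Q` from `Q'`, since tangles are closed under joins of small order and down-closed,
and so it is efficient. Otherwise submodularity forces `|r ∧ s|, |r ∧ s*| < |r|`. Both meets lie
below `r`, so the one of `P, P'` containing `r` contains them, and by minimality of `|r|` so does
the other one, which contains `r*`; but `r*, r ∧ s, r ∧ s*` cover `G`, against the tangle axiom.
-/

variable {V : Type*} [Fintype V] [DecidableEq V]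

/-- An oriented separation-candidate of a graph on `V`: a pair of vertex sets. -/
abbrev GSep (V : Type*) := Finset V × Finset V

/-- The involution `(A,B) ↦ (B,A)`. -/
def sepInv (p : GSep V) : GSep V := (p.2, p.1)

/-- The partial order `(A,B) ≤ (C,D)` iff `A ⊆ C` and `B ⊇ D`. -/
def sepLE (p q : GSep V) : Prop := p.1 ⊆ q.1 ∧ q.2 ⊆ p.2

/-- Strict version of `sepLE`. -/
def sepLT (p q : GSep V) : Prop := sepLE p q ∧ p ≠ q

/-- The join `(A,B) ∨ (C,D) = (A ∪ C, B ∩ D)`. -/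
def sepJoin (p q : GSep V) : GSep V := (p.1 ∪ q.1, p.2 ∩ q.2)

/-- The meet `(A,B) ∧ (C,D) = (A ∩ C, B ∪ D)`. -/
def sepMeet (p q : GSep V) : GSep V := (p.1 ∩ q.1, p.2 ∪ q.2)

/-- The order `|(A,B)| = |A ∩ B|`. -/
def sepOrder (p : GSep V) : ℕ := (p.1 ∩ p.2).card

/-- `(A,B)` is a separation of `G`: `A ∪ B = V` and `G` has no edge between
`A \ B` and `B \ A`. -/
def IsSep (G : SimpleGraph V) (p : GSep V) : Prop :=
  p.1 ∪ p.2 = Finset.univ ∧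
    ∀ a b : V, G.Adj a b → a ∈ p.1 → a ∉ p.2 → b ∈ p.2 → b ∉ p.1 → False

/-- Two separations are nested if they have `sepLE`-comparable orientations. -/
def sepNested (p q : GSep V) : Prop :=
  sepLE p q ∨ sepLE p (sepInv q) ∨ sepLE (sepInv p) q ∨ sepLE (sepInv p) (sepInv q)

/-- `c` is a corner separation of `p` and `q`: a join of orientations of `p`
and `q`, or the involution of such a join. -/
def sepIsCorner (c p q : GSep V) : Prop :=
  ∃ p' q', (p' = p ∨ p' = sepInv p) ∧ (q' = q ∨ q' = sepInv q) ∧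
    (c = sepJoin p' q' ∨ c = sepInv (sepJoin p' q'))

/-- For three members `(A₁,B₁), (A₂,B₂), (A₃,B₃)` of a tangle there must be a
vertex or an edge of `G` not contained in any of the induced subgraphs
`G[Aᵢ]`: this expresses `G[A₁] ∪ G[A₂] ∪ G[A₃] ≠ G`. -/
def TangleAvoids (G : SimpleGraph V) (p₁ p₂ p₃ : GSep V) : Prop :=
  (∃ v : V, v ∉ p₁.1 ∧ v ∉ p₂.1 ∧ v ∉ p₃.1) ∨
  (∃ x y : V, G.Adj x y ∧ ¬(x ∈ p₁.1 ∧ y ∈ p₁.1) ∧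
    ¬(x ∈ p₂.1 ∧ y ∈ p₂.1) ∧ ¬(x ∈ p₃.1 ∧ y ∈ p₃.1))

/-- A `k`-tangle of `G`: an orientation of all separations of order `< k`
satisfying the tangle property (T). -/
def IsTangle (G : SimpleGraph V) (k : ℕ) (τ : Set (GSep V)) : Prop :=
  (∀ p ∈ τ, IsSep G p ∧ sepOrder p < k) ∧
  (∀ p : GSep V, IsSep G p → sepOrder p < k →
    (p ∈ τ ∨ sepInv p ∈ τ) ∧ (p ∈ τ → sepInv p ∈ τ → p = sepInv p)) ∧
  (∀ p₁ ∈ τ, ∀ p₂ ∈ τ, ∀ p₃ ∈ τ, TangleAvoids G p₁ p₂ p₃)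

/-- A maximal tangle of `G`: a `k`-tangle, for some `k`, that is not properly
contained in any other tangle (equivalently, not a subset of an `l`-tangle for
any `l > k`). -/
def IsMaximalTangle (G : SimpleGraph V) (τ : Set (GSep V)) : Prop :=
  (∃ k, IsTangle G k τ) ∧ ∀ τ' : Set (GSep V), (∃ l, IsTangle G l τ') →
    τ ⊆ τ' → τ' = τ

/-- `p` distinguishes the tangles `τ` and `τ'`. -/
def sepDistinguishes (p : GSep V) (τ τ' : Set (GSep V)) : Prop :=
  (p ∈ τ ∧ sepInv p ∈ τ') ∨ (sepInv p ∈ τ ∧ p ∈ τ')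

/-- `p` distinguishes `τ` and `τ'` efficiently: it does so and has minimum
order among all separations of `G` distinguishing `τ` and `τ'`. -/
def sepEffDist (G : SimpleGraph V) (p : GSep V) (τ τ' : Set (GSep V)) : Prop :=
  IsSep G p ∧ sepDistinguishes p τ τ' ∧
    ∀ q : GSep V, IsSep G q → sepDistinguishes q τ τ' → sepOrder p ≤ sepOrder q

/-- A family `A` of subsets of the universe of separations of `G` splinters
if for all `i`, `j` and every crossing pair `a ∈ A i \ A j`, `b ∈ A j \ A i`,
at least one corner separation of `a` and `b` lies in `A i ∪ A j`. -/
def sepSplinters {I : Type*} (A : I → Set (GSep V)) : Prop :=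
  ∀ i j : I, ∀ a ∈ A i, a ∉ A j → ∀ b ∈ A j, b ∉ A i → ¬ sepNested a b →
    ∃ c, sepIsCorner c a b ∧ c ∈ A i ∪ A j

def IsOrientation (p' p : GSep V) : Prop := p' = p ∨ p' = sepInv p

/-- `G = G[X] ∪ G[Y] ∪ G[Z]`; the tangle axiom forbids this for the first sides of three members. -/
def IsCoveredBy (G : SimpleGraph V) (X Y Z : Finset V) : Prop :=
  (∀ v, v ∈ X ∨ v ∈ Y ∨ v ∈ Z) ∧
    ∀ x y, G.Adj x y → (x ∈ X ∧ y ∈ X) ∨ (x ∈ Y ∧ y ∈ Y) ∨ (x ∈ Z ∧ y ∈ Z)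

omit [Fintype V] [DecidableEq V] in
lemma IsCoveredBy.mono {G : SimpleGraph V} {X Y Z X' Y' Z' : Finset V} (h : IsCoveredBy G X Y Z)
    (hX : X ⊆ X') (hY : Y ⊆ Y') (hZ : Z ⊆ Z') : IsCoveredBy G X' Y' Z' :=
  ⟨fun v => (h.1 v).imp (@hX v) (Or.imp (@hY v) (@hZ v)), fun x y hxy => (h.2 x y hxy).imp
    (And.imp (@hX x) (@hX y)) (Or.imp (And.imp (@hY x) (@hY y)) (And.imp (@hZ x) (@hZ y)))⟩

section Orientations

omit [Fintype V] [DecidableEq V]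

variable {p p' q : GSep V} {τ τ' : Set (GSep V)}

lemma sepLE.inv (h : sepLE p q) : sepLE (sepInv q) (sepInv p) := ⟨h.2, h.1⟩

lemma IsOrientation.inv (h : IsOrientation p' p) : IsOrientation (sepInv p') p := by
  rcases h with rfl | rfl
  exacts [Or.inr rfl, Or.inl rfl]

lemma sepDistinguishes.symm (h : sepDistinguishes p τ τ') : sepDistinguishes p τ' τ :=
  (Or.symm h).imp And.symm And.symm

lemma sepDistinguishes.inv (h : sepDistinguishes p τ τ') : sepDistinguishes (sepInv p) τ τ' :=
  Or.symm h

lemma sepDistinguishes.of_isOrientation (h : sepDistinguishes p τ τ') (hp' : IsOrientation p' p) :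
    sepDistinguishes p' τ τ' := by
  rcases hp' with rfl | rfl
  exacts [h, h.inv]

lemma sepDistinguishes.exists_orientation (h : sepDistinguishes p τ τ') :
    ∃ p', IsOrientation p' p ∧ p' ∈ τ ∧ sepInv p' ∈ τ' := by
  rcases h with ⟨h, h'⟩ | ⟨h, h'⟩
  exacts [⟨p, Or.inl rfl, h, h'⟩, ⟨sepInv p, Or.inr rfl, h, h'⟩]

end Orientations

section Lattice

omit [Fintype V]

variable {p p' q : GSep V}

@[simp]
lemma sepOrder_sepInv (p : GSep V) : sepOrder (sepInv p) = sepOrder p := by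
  simp [sepOrder, sepInv, Finset.inter_comm]

lemma IsOrientation.sepOrder_eq (h : IsOrientation p' p) : sepOrder p' = sepOrder p := by
  rcases h with rfl | rfl <;> simp

lemma sepLE_sepJoin_right (p q : GSep V) : sepLE q (sepJoin p q) :=
  ⟨Finset.subset_union_right, Finset.inter_subset_right⟩

lemma sepLE_sepMeet_left (p q : GSep V) : sepLE (sepMeet p q) p :=
  ⟨Finset.inter_subset_left, Finset.subset_union_left⟩

lemma sepJoin_comm (p q : GSep V) : sepJoin p q = sepJoin q p := by
  simp [sepJoin, Finset.union_comm, Finset.inter_comm]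

lemma sepIsCorner.symm {c : GSep V} (h : sepIsCorner c p q) : sepIsCorner c q p := by
  obtain ⟨p', q', hp, hq, hc⟩ := h
  exact ⟨q', p', hq, hp, sepJoin_comm p' q' ▸ hc⟩

lemma sepOrder_sepJoin_add_sepMeet_le (p q : GSep V) :
    sepOrder (sepJoin p q) + sepOrder (sepMeet p q) ≤ sepOrder p + sepOrder q := by
  simp only [sepOrder, sepJoin, sepMeet]
  rw [← Finset.card_union_add_card_inter, ← Finset.card_union_add_card_inter (p.1 ∩ p.2)]
  apply add_le_add <;> apply Finset.card_le_card <;> intro v <;>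
    simp only [Finset.mem_union, Finset.mem_inter] <;> tauto

end Lattice

section Graph

variable {G : SimpleGraph V} {p q r s : GSep V}

lemma IsSep.mem_or_mem (h : IsSep G p) (v : V) : v ∈ p.1 ∨ v ∈ p.2 :=
  Finset.mem_union.mp (h.1 ▸ Finset.mem_univ v)

lemma IsSep.adj_mem {x y : V} (h : IsSep G p) (hxy : G.Adj x y) :
    (x ∈ p.1 ∧ y ∈ p.1) ∨ (x ∈ p.2 ∧ y ∈ p.2) := by
  have := h.2 x y hxy
  have := h.2 y x hxy.symm
  have := h.mem_or_mem x
  have := h.mem_or_mem y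
  tauto

lemma IsSep.inv (h : IsSep G p) : IsSep G (sepInv p) :=
  ⟨Finset.union_comm p.1 p.2 ▸ h.1, fun a b hab ha ha' hb hb' => h.2 b a hab.symm hb hb' ha ha'⟩

lemma IsSep.join (hp : IsSep G p) (hq : IsSep G q) : IsSep G (sepJoin p q) := by
  refine ⟨Finset.eq_univ_iff_forall.mpr fun v => ?_, fun a b hab ha ha' hb hb' => ?_⟩
  · have := hp.mem_or_mem v
    have := hq.mem_or_mem v
    simp only [sepJoin, Finset.mem_union, Finset.mem_inter]
    tauto
  · have := hp.adj_mem hab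
    have := hq.adj_mem hab
    simp only [sepJoin, Finset.mem_union, Finset.mem_inter] at ha ha' hb hb'
    tauto

lemma IsSep.meet (hp : IsSep G p) (hq : IsSep G q) : IsSep G (sepMeet p q) :=
  (hp.inv.join hq.inv).inv

lemma IsSep.isCoveredBy_split (hr : IsSep G r) (hs : IsSep G s) :
    IsCoveredBy G r.1 (r.2 ∩ s.1) (r.2 ∩ s.2) := by
  refine ⟨fun v => ?_, fun x y hxy => ?_⟩
  · have := hr.mem_or_mem v
    have := hs.mem_or_mem v
    simp only [Finset.mem_inter]
    tauto
  · have := hr.adj_mem hxy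
    have := hs.adj_mem hxy
    simp only [Finset.mem_inter]
    tauto

lemma IsSep.isCoveredBy (hr : IsSep G r) : IsCoveredBy G r.1 r.2 r.2 :=
  (hr.isCoveredBy_split hr).mono subset_rfl Finset.inter_subset_left Finset.inter_subset_left

end Graph

namespace IsTangle

variable {G : SimpleGraph V} {k : ℕ} {τ : Set (GSep V)} {p q : GSep V}

lemma not_isCoveredBy (hτ : IsTangle G k τ) {p₁ p₂ p₃ : GSep V} (h₁ : p₁ ∈ τ) (h₂ : p₂ ∈ τ)
    (h₃ : p₃ ∈ τ) : ¬ IsCoveredBy G p₁.1 p₂.1 p₃.1 := by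
  rintro ⟨hv, he⟩
  rcases hτ.2.2 p₁ h₁ p₂ h₂ p₃ h₃ with ⟨v, hv₁, hv₂, hv₃⟩ | ⟨x, y, hxy, hx, hy, hz⟩
  · rcases hv v with h | h | h <;> contradiction
  · rcases he x y hxy with h | h | h <;> contradiction

lemma mem_or_inv_mem (hτ : IsTangle G k τ) (hp : IsSep G p) (hk : sepOrder p < k) :
    p ∈ τ ∨ sepInv p ∈ τ :=
  (hτ.2.1 p hp hk).1

lemma mem_of_sepLE (hτ : IsTangle G k τ) (hp : p ∈ τ) (hq : IsSep G q) (hk : sepOrder q < k)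
    (hqp : sepLE q p) : q ∈ τ :=
  (hτ.mem_or_inv_mem hq hk).resolve_right fun hq' =>
    hτ.not_isCoveredBy hp hq' hq' (hq.isCoveredBy.mono hqp.1 subset_rfl subset_rfl)

lemma sepJoin_mem (hτ : IsTangle G k τ) (hp : p ∈ τ) (hq : q ∈ τ)
    (hk : sepOrder (sepJoin p q) < k) : sepJoin p q ∈ τ := by
  have hpq : IsSep G (sepJoin p q) := (hτ.1 p hp).1.join (hτ.1 q hq).1
  refine (hτ.mem_or_inv_mem hpq hk).resolve_right fun h => hτ.not_isCoveredBy hp hq h ?_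
  exact ((hτ.1 p hp).1.isCoveredBy_split (hτ.1 q hq).1).mono subset_rfl
    Finset.inter_subset_right subset_rfl

lemma exists_isOrientation_mem_mem {k' : ℕ} {τ' : Set (GSep V)} (hτ : IsTangle G k τ)
    (hτ' : IsTangle G k' τ') (hp : IsSep G p) (hk : sepOrder p < k) (hk' : sepOrder p < k')
    (hnd : ¬ sepDistinguishes p τ τ') : ∃ p', IsOrientation p' p ∧ p' ∈ τ ∧ p' ∈ τ' := by
  rcases hτ.mem_or_inv_mem hp hk with h | h <;> rcases hτ'.mem_or_inv_mem hp hk' with h' | h'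
  · exact ⟨p, Or.inl rfl, h, h'⟩
  · exact absurd (Or.inl ⟨h, h'⟩) hnd
  · exact absurd (Or.inr ⟨h, h'⟩) hnd
  · exact ⟨sepInv p, Or.inr rfl, h, h'⟩

end IsTangle

namespace sepEffDist

variable {G : SimpleGraph V} {p p' q : GSep V} {τ τ' : Set (GSep V)}

lemma symm (h : sepEffDist G p τ τ') : sepEffDist G p τ' τ :=
  ⟨h.1, h.2.1.symm, fun q hq hd => h.2.2 q hq hd.symm⟩

lemma of_isOrientation (h : sepEffDist G p τ τ') (hp' : IsOrientation p' p) :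
    sepEffDist G p' τ τ' := by
  refine ⟨?_, h.2.1.of_isOrientation hp', hp'.sepOrder_eq ▸ h.2.2⟩
  rcases hp' with rfl | rfl
  exacts [h.1, h.1.inv]

lemma of_le (h : sepEffDist G p τ τ') (hq : IsSep G q) (hd : sepDistinguishes q τ τ')
    (hle : sepOrder q ≤ sepOrder p) : sepEffDist G q τ τ' :=
  ⟨hq, hd, fun q' hq' hd' => hle.trans (h.2.2 q' hq' hd')⟩

lemma mem_of_lt {k' : ℕ} (h : sepEffDist G p τ τ') (hτ' : IsTangle G k' τ') (hq : IsSep G q)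
    (hk' : sepOrder q < k') (hqτ : q ∈ τ) (hlt : sepOrder q < sepOrder p) : q ∈ τ' :=
  (hτ'.mem_or_inv_mem hq hk').resolve_right fun h' => (h.2.2 q hq (Or.inl ⟨hqτ, h'⟩)).not_gt hlt

end sepEffDist

section Corners

variable {G : SimpleGraph V} {k k' l l' : ℕ} {P P' Q Q' : Set (GSep V)} {r s : GSep V}

lemma sepOrder_le_sepOrder_sepMeet_or (hP : IsTangle G k P) (hP' : IsTangle G k' P')
    (hr : sepEffDist G r P P') (hrP : r ∈ P) (hrP' : sepInv r ∈ P') (hs : IsSep G s) :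
    sepOrder r ≤ sepOrder (sepMeet r s) ∨ sepOrder r ≤ sepOrder (sepMeet r (sepInv s)) := by
  by_contra! h
  have hk : sepOrder r < k := (hP.1 r hrP).2
  have hk' : sepOrder r < k' := by simpa using (hP'.1 _ hrP').2
  have hsmall_mem (d : GSep V) (hd : IsSep G d) (hdr : sepLE d r) (hlt : sepOrder d < sepOrder r) :
      d ∈ P' :=
    hr.mem_of_lt hP' hd (hlt.trans hk') (hP.mem_of_sepLE hrP hd (hlt.trans hk) hdr) hlt
  exact hP'.not_isCoveredBy hrP'
    (hsmall_mem _ (hr.1.meet hs) (sepLE_sepMeet_left r s) h.1)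
    (hsmall_mem _ (hr.1.meet hs.inv) (sepLE_sepMeet_left r _) h.2)
    (hr.1.inv.isCoveredBy_split hs)

lemma sepEffDist_sepJoin (hQ : IsTangle G l Q) (hQ' : IsTangle G l' Q') (hs : sepEffDist G s Q Q')
    (hrQ : r ∈ Q) (hsQ : s ∈ Q) (hsQ' : sepInv s ∈ Q')
    (hle : sepOrder (sepJoin r s) ≤ sepOrder s) : sepEffDist G (sepJoin r s) Q Q' := by
  have hrs : IsSep G (sepJoin r s) := (hQ.1 r hrQ).1.join hs.1
  have hl' : sepOrder s < l' := by simpa using (hQ'.1 _ hsQ').2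
  refine hs.of_le hrs (Or.inl ⟨hQ.sepJoin_mem hrQ hsQ (hle.trans_lt (hQ.1 s hsQ).2), ?_⟩) hle
  exact hQ'.mem_of_sepLE hsQ' hrs.inv (by simpa using hle.trans_lt hl')
    (sepLE_sepJoin_right r s).inv

lemma sepEffDist_sepJoin_or (hP : IsTangle G k P) (hP' : IsTangle G k' P')
    (hQ : IsTangle G l Q) (hQ' : IsTangle G l' Q') (hr : sepEffDist G r P P') (hrP : r ∈ P)
    (hrP' : sepInv r ∈ P') (hs : sepEffDist G s Q Q') (hrQ : r ∈ Q) (hrQ' : r ∈ Q')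
    (hsQ : s ∈ Q) (hsQ' : sepInv s ∈ Q') :
    sepEffDist G (sepJoin r s) Q Q' ∨ sepEffDist G (sepJoin r (sepInv s)) Q Q' := by
  -- by submodularity, a meet of order at least `|r|` makes the opposite join no larger than `s`
  have := sepOrder_sepJoin_add_sepMeet_le r s
  have := sepOrder_sepJoin_add_sepMeet_le r (sepInv s)
  rcases sepOrder_le_sepOrder_sepMeet_or hP hP' hr hrP hrP' hs.1 with h | h
  · exact .inl (sepEffDist_sepJoin hQ hQ' hs hrQ hsQ hsQ' (by omega))
  · refine .inr (sepEffDist.symm ?_)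
    refine sepEffDist_sepJoin hQ' hQ (hs.symm.of_isOrientation (Or.inr rfl)) hrQ' hsQ' hsQ ?_
    simp only [sepOrder_sepInv] at *
    omega

lemma exists_sepIsCorner_sepEffDist (hP : IsTangle G k P) (hP' : IsTangle G k' P')
    (hQ : IsTangle G l Q) (hQ' : IsTangle G l' Q') (hr : sepEffDist G r P P')
    (hs : sepEffDist G s Q Q') (hrs : sepOrder r ≤ sepOrder s) (hnr : ¬ sepEffDist G r Q Q') :
    ∃ c, sepIsCorner c r s ∧ sepEffDist G c Q Q' := by
  obtain ⟨s', hs', hs'Q, hs'Q'⟩ := hs.2.1.exists_orientation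
  have hl : sepOrder s < l := hs'.sepOrder_eq ▸ (hQ.1 s' hs'Q).2
  have hl' : sepOrder s < l' := by simpa [hs'.sepOrder_eq] using (hQ'.1 _ hs'Q').2
  obtain ⟨r', hr', hr'Q, hr'Q'⟩ := hQ.exists_isOrientation_mem_mem hQ' hr.1 (hrs.trans_lt hl)
    (hrs.trans_lt hl') fun hd => hnr (hs.of_le hr.1 hd hrs)
  have hr'r := hr.of_isOrientation hr'
  obtain h | h : sepEffDist G (sepJoin r' s') Q Q' ∨
      sepEffDist G (sepJoin r' (sepInv s')) Q Q' := by
    rcases hr'r.2.1 with ⟨hr'P, hr'P'⟩ | ⟨hr'P, hr'P'⟩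
    · exact sepEffDist_sepJoin_or hP hP' hQ hQ' hr'r hr'P hr'P' (hs.of_isOrientation hs')
        hr'Q hr'Q' hs'Q hs'Q'
    · exact sepEffDist_sepJoin_or hP' hP hQ hQ' hr'r.symm hr'P' hr'P (hs.of_isOrientation hs')
        hr'Q hr'Q' hs'Q hs'Q'
  · exact ⟨_, ⟨r', s', hr', hs', .inl rfl⟩, h⟩
  · exact ⟨_, ⟨r', sepInv s', hr', hs'.inv, .inl rfl⟩, h⟩

end Corners

/-- **The family of the sets of efficient distinguishers of pairs of distinct
maximal tangles of a finite graph splinters.** -/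
theorem graph_efficient_distinguishers_splinter (G : SimpleGraph V) :
    sepSplinters
      (fun pp : {pp : Set (GSep V) × Set (GSep V) //
          IsMaximalTangle G pp.1 ∧ IsMaximalTangle G pp.2 ∧ pp.1 ≠ pp.2} =>
        {p | sepEffDist G p pp.1.1 pp.1.2}) := by
  intro i j a ha hanj b hb hbni _
  obtain ⟨⟨k, hP⟩, _⟩ := i.2.1
  obtain ⟨⟨k', hP'⟩, _⟩ := i.2.2.1
  obtain ⟨⟨l, hQ⟩, _⟩ := j.2.1
  obtain ⟨⟨l', hQ'⟩, _⟩ := j.2.2.1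
  rcases le_total (sepOrder a) (sepOrder b) with hab | hba
  · obtain ⟨c, hc, hcb⟩ := exists_sepIsCorner_sepEffDist hP hP' hQ hQ' ha hb hab hanj
    exact ⟨c, hc, .inr hcb⟩
  · obtain ⟨c, hc, hca⟩ := exists_sepIsCorner_sepEffDist hQ hQ' hP hP' hb ha hba hbni
    exact ⟨c, hc.symm, .inl hca⟩
end

section
/- Let U be a finite submodular universe of separations and 𝒫 a robust set of profiles in U. Then there is a nested set T ⊆ U of separations such that: (i) every two distinguishable profiles in 𝒫 are efficiently distinguished by some separation in T; (ii) every separation in T efficiently distinguishes a pair of profiles in 𝒫; and (iii) if all the profiles in 𝒫 are regular, then T is a regular tree set. -/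
/-!
The tree is built greedily: the distinguishable pairs of profiles are handled in increasing order
of the order of their efficient distinguishers, and for each pair not yet efficiently
distinguished we add an efficient distinguisher that is nested with all separations chosen so far.

Such a distinguisher exists by uncrossing. Let `t`, of order at most `|c|`, efficiently distinguish
a robust pair and cross an efficient `Q`–`Q'` distinguisher `c`, and let `Q` and `Q'` orient `t`
alike, say as `r`. Robustness forbids both corners `r ⊓ c` and `r ⊓ c*` to have order below `|r|`,
so by submodularity one of the corners `r ⊔ c`, `r ⊔ c*` has order at most `|c|`; it still
distinguishes `Q` and `Q'`, and it is nested with `t` and with everything nested with both `t`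
and `c`. Hence an efficient `Q`–`Q'` distinguisher crossing as few chosen separations as possible
crosses none of them.
-/

variable {U : Type*}

/-- `O` is an orientation of `S`: it contains, for each `s ∈ S`, exactly one
of `s` and `star s`. -/
def Orients [Lattice U] (star : U → U) (S O : Set U) : Prop :=
  O ⊆ S ∧ ∀ s ∈ S, (s ∈ O ∨ star s ∈ O) ∧ (s ∈ O → star s ∈ O → s = star s)

/-- `O` is consistent: there are no `r, s ∈ O` with `star r < s`. -/
def Consistent [Lattice U] (star : U → U) (O : Set U) : Prop :=
  ∀ r ∈ O, ∀ s ∈ O, ¬ star r < s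

/-- A profile of `S` is a consistent orientation `P` of `S` such that for all
`r, s ∈ P` we have `star r ⊓ star s ∉ P`. -/
def IsProfile [Lattice U] (star : U → U) (S P : Set U) : Prop :=
  Orients star S P ∧ Consistent star P ∧
    ∀ r ∈ P, ∀ s ∈ P, star r ⊓ star s ∉ P

/-- A profile in `U` (with order function `f`) is a `k`-profile for some
integer `k`, i.e. a profile of `S_k = {s | f s < k}`. -/
def IsProfileIn [Lattice U] (star : U → U) (f : U → ℝ) (P : Set U) : Prop :=
  ∃ k : ℤ, IsProfile star {s : U | f s < (k : ℝ)} P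

/-- `s` distinguishes `P` and `P'`: one orientation of `s` lies in `P` and the
other in `P'`. -/
def Distinguishes [Lattice U] (star : U → U) (s : U) (P P' : Set U) : Prop :=
  (s ∈ P ∧ star s ∈ P') ∨ (star s ∈ P ∧ s ∈ P')

/-- `s` distinguishes `P` and `P'` efficiently: it does so and has minimum
order among all separations distinguishing `P` and `P'`. -/
def EffDist [Lattice U] (star : U → U) (f : U → ℝ) (s : U) (P P' : Set U) : Prop :=
  Distinguishes star s P P' ∧ ∀ t : U, Distinguishes star t P P' → f s ≤ f t

/-- A profile `P` is robust if there are no `r, s` with `star r ∈ P`,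
`r ⊓ s ∈ P`, `r ⊓ star s ∈ P`, `f (r ⊓ s) < f r` and `f (r ⊓ star s) < f r`. -/
def RobustProfile [Lattice U] (star : U → U) (f : U → ℝ) (P : Set U) : Prop :=
  ¬ ∃ r s : U, star r ∈ P ∧ r ⊓ s ∈ P ∧ r ⊓ star s ∈ P ∧
      f (r ⊓ s) < f r ∧ f (r ⊓ star s) < f r

namespace OrderReversingInvolution

variable [Lattice U] {star : U → U}

theorem star_star (h : OrderReversingInvolution star) (s : U) : star (star s) = s := h.1 s

theorem star_le_star_iff (h : OrderReversingInvolution star) {r s : U} :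
    star r ≤ star s ↔ s ≤ r := (h.2 s r).symm

theorem star_lt_star_iff (h : OrderReversingInvolution star) {r s : U} :
    star r < star s ↔ s < r := by
  simp only [lt_iff_le_not_ge, h.star_le_star_iff]

theorem le_star_comm_s6 (h : OrderReversingInvolution star) {r s : U} :
    r ≤ star s ↔ s ≤ star r := by
  rw [← h.star_le_star_iff, h.star_star]

theorem star_le_comm (h : OrderReversingInvolution star) {r s : U} :
    star r ≤ s ↔ star s ≤ r := by
  rw [← h.star_le_star_iff, h.star_star]

def toOrderIso (h : OrderReversingInvolution star) : U ≃o Uᵒᵈ where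
  toFun s := OrderDual.toDual (star s)
  invFun s := star (OrderDual.ofDual s)
  left_inv := h.1
  right_inv := h.1
  map_rel_iff' := h.star_le_star_iff

theorem star_sup (h : OrderReversingInvolution star) (r s : U) :
    star (r ⊔ s) = star r ⊓ star s := h.toOrderIso.map_sup r s

end OrderReversingInvolution

section Nested

variable [Lattice U] {star : U → U} {r s u : U}

theorem Nested.refl (s : U) : Nested star s s := Or.inl le_rfl

theorem Nested.symm (h : OrderReversingInvolution star) (hrs : Nested star r s) :
    Nested star s r := by
  rcases hrs with hle | hle | hle | hle
  · exact Or.inr (Or.inr (Or.inr (h.star_le_star_iff.2 hle)))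
  · exact Or.inr (Or.inl (h.le_star_comm_s6.1 hle))
  · exact Or.inr (Or.inr (Or.inl (h.star_le_comm.1 hle)))
  · exact Or.inl (h.star_le_star_iff.1 hle)

theorem nested_star_right_iff_s6 (h : OrderReversingInvolution star) :
    Nested star r (star s) ↔ Nested star r s := by
  unfold Nested
  rw [h.star_star]
  tauto

theorem nested_star_left_iff_s6 (h : OrderReversingInvolution star) :
    Nested star (star r) s ↔ Nested star r s := by
  unfold Nested
  rw [h.star_star]
  tauto

theorem Nested.sup (h : OrderReversingInvolution star) (hur : Nested star u r)
    (hus : Nested star u s) (hrs : ¬ r ≤ star s) : Nested star u (r ⊔ s) := by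
  rcases hur with h1 | h1 | h1 | h1
  · exact Or.inl (le_sup_of_le_left h1)
  · rcases hus with h2 | h2 | h2 | h2
    · exact Or.inl (le_sup_of_le_right h2)
    · exact Or.inr (Or.inl (h.star_sup r s ▸ le_inf h1 h2))
    · exact Or.inr (Or.inr (Or.inl (le_sup_of_le_right h2)))
    · exact absurd (h.le_star_comm_s6.1 ((h.star_le_star_iff.1 h2).trans h1)) hrs
  · exact Or.inr (Or.inr (Or.inl (le_sup_of_le_left h1)))
  · rcases hus with h2 | h2 | h2 | h2
    · exact Or.inl (le_sup_of_le_right h2)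
    · exact absurd ((h.star_le_star_iff.1 h1).trans h2) hrs
    · exact Or.inr (Or.inr (Or.inl (le_sup_of_le_right h2)))
    · exact Or.inr (Or.inr (Or.inr (h.star_sup r s ▸ le_inf h1 h2)))

end Nested

section Distinguishes

variable [Lattice U] {star : U → U} {f : U → ℝ} {s t : U} {P P' : Set U}

theorem Distinguishes.symm (hs : Distinguishes star s P P') : Distinguishes star s P' P := by
  unfold Distinguishes at *
  tauto

theorem distinguishes_star_iff (h : OrderReversingInvolution star) :
    Distinguishes star (star s) P P' ↔ Distinguishes star s P P' := by
  unfold Distinguishes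
  rw [h.star_star]
  tauto

theorem EffDist.symm (hs : EffDist star f s P P') : EffDist star f s P' P :=
  ⟨hs.1.symm, fun t ht => hs.2 t ht.symm⟩

theorem effDist_star_iff (h : OrderReversingInvolution star) (hfstar : ∀ s, f (star s) = f s) :
    EffDist star f (star s) P P' ↔ EffDist star f s P P' := by
  simp only [EffDist, distinguishes_star_iff h, hfstar]

theorem exists_effDist [Finite U] (hd : ∃ s, Distinguishes star s P P') :
    ∃ s, EffDist star f s P P' :=
  let ⟨s, hs, hmin⟩ := Set.exists_min_image {v | Distinguishes star v P P'} f (Set.toFinite _) hd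
  ⟨s, hs, hmin⟩

end Distinguishes

namespace IsProfileIn

variable [Lattice U] {star : U → U} {f : U → ℝ} {P : Set U} {r s t : U}

theorem mem_or_star_mem_of_le (hP : IsProfileIn star f P) (hs : s ∈ P) (hts : f t ≤ f s) :
    t ∈ P ∨ star t ∈ P :=
  let ⟨_, hk⟩ := hP
  (hk.1.2 t (hts.trans_lt (hk.1.1 hs))).1

theorem mem_of_lt (h : OrderReversingInvolution star) (hP : IsProfileIn star f P) (hs : s ∈ P)
    (hts : t < s) (hf : f t ≤ f s) : t ∈ P := by
  refine (hP.mem_or_star_mem_of_le hs hf).resolve_right fun ht => ?_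
  obtain ⟨_, hk⟩ := hP
  exact hk.2.1 _ ht _ hs (by rwa [h.star_star])

theorem sup_mem (h : OrderReversingInvolution star) (hP : IsProfileIn star f P) (hr : r ∈ P)
    (hs : s ∈ P) (hf : f (r ⊔ s) ≤ f s) : r ⊔ s ∈ P := by
  refine (hP.mem_or_star_mem_of_le hs hf).resolve_right fun hrs => ?_
  obtain ⟨_, hk⟩ := hP
  exact hk.2.2 r hr s hs (h.star_sup r s ▸ hrs)

end IsProfileIn

section Uncrossing

variable [Lattice U] {star : U → U} {f : U → ℝ} {P P' Pa Pb Q Q' : Set U} {c r s t x : U}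

theorem Distinguishes.mem_or_star_mem_of_le (hfstar : ∀ s, f (star s) = f s)
    (hs : Distinguishes star s P P') (hP : IsProfileIn star f P) (hP' : IsProfileIn star f P')
    (hts : f t ≤ f s) : (t ∈ P ∨ star t ∈ P) ∧ (t ∈ P' ∨ star t ∈ P') := by
  have hts' : f t ≤ f (star s) := by rwa [hfstar]
  rcases hs with ⟨hsP, hsP'⟩ | ⟨hsP, hsP'⟩
  · exact ⟨hP.mem_or_star_mem_of_le hsP hts, hP'.mem_or_star_mem_of_le hsP' hts'⟩
  · exact ⟨hP.mem_or_star_mem_of_le hsP hts', hP'.mem_or_star_mem_of_le hsP' hts⟩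

/-- Otherwise `r ⊓ x` would distinguish `Pa` and `Pb` with smaller order than `r`. -/
theorem inf_mem_of_effDist (h : OrderReversingInvolution star) (hfstar : ∀ s, f (star s) = f s)
    (hPa : IsProfileIn star f Pa) (hPb : IsProfileIn star f Pb) (hr : EffDist star f r Pa Pb)
    (hrb : r ∈ Pb) (hlt : f (r ⊓ x) < f r) (hx : ¬ r ≤ x) :
    r ⊓ x ∈ Pa := by
  have hb : r ⊓ x ∈ Pb := hPb.mem_of_lt h hrb (inf_lt_left.2 hx) hlt.le
  refine (hr.1.mem_or_star_mem_of_le hfstar hPa hPb hlt.le).1.resolve_right fun ha => ?_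
  exact (hr.2 _ (Or.inr ⟨ha, hb⟩)).not_gt hlt

theorem le_inf_or_le_inf_star_of_effDist (h : OrderReversingInvolution star)
    (hfstar : ∀ s, f (star s) = f s) (hPa : IsProfileIn star f Pa) (hPb : IsProfileIn star f Pb)
    (hrobA : RobustProfile star f Pa) (hrobB : RobustProfile star f Pb)
    (hr : EffDist star f r Pa Pb) (hs : ¬ r ≤ s) (hs' : ¬ r ≤ star s) :
    f r ≤ f (r ⊓ s) ∨ f r ≤ f (r ⊓ star s) := by
  by_contra! hlt
  rcases hr.1 with ⟨hra, hrb⟩ | ⟨hra, hrb⟩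
  · exact hrobB ⟨r, s, hrb, inf_mem_of_effDist h hfstar hPb hPa hr.symm hra hlt.1 hs,
      inf_mem_of_effDist h hfstar hPb hPa hr.symm hra hlt.2 hs', hlt⟩
  · exact hrobA ⟨r, s, hra, inf_mem_of_effDist h hfstar hPa hPb hr hrb hlt.1 hs,
      inf_mem_of_effDist h hfstar hPa hPb hr hrb hlt.2 hs', hlt⟩

theorem Distinguishes.sup (h : OrderReversingInvolution star) (hfstar : ∀ s, f (star s) = f s)
    (hQ : IsProfileIn star f Q) (hQ' : IsProfileIn star f Q') (hs : Distinguishes star s Q Q')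
    (hrQ : r ∈ Q) (hrQ' : r ∈ Q') (hf : f (r ⊔ s) ≤ f s) (hrs : ¬ r ≤ s) :
    Distinguishes star (r ⊔ s) Q Q' := by
  wlog hsQ : s ∈ Q ∧ star s ∈ Q' generalizing Q Q'
  · have hsQ' := hs.resolve_left hsQ
    exact (this hQ' hQ hs.symm hrQ' hrQ ⟨hsQ'.2, hsQ'.1⟩).symm
  refine Or.inl ⟨hQ.sup_mem h hrQ hsQ.1 hf, hQ'.mem_of_lt h hsQ.2 ?_ ?_⟩
  · exact h.star_lt_star_iff.2 (right_lt_sup.2 hrs)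
  · rwa [hfstar, hfstar]

theorem exists_effDist_nested_of_mem (h : OrderReversingInvolution star)
    (hfstar : ∀ s, f (star s) = f s) (hfsub : ∀ r s : U, f (r ⊔ s) + f (r ⊓ s) ≤ f r + f s)
    (hPa : IsProfileIn star f Pa) (hPb : IsProfileIn star f Pb)
    (hrobA : RobustProfile star f Pa) (hrobB : RobustProfile star f Pb)
    (hQ : IsProfileIn star f Q) (hQ' : IsProfileIn star f Q')
    (hr : EffDist star f r Pa Pb) (hc : EffDist star f c Q Q') (hx : ¬ Nested star r c)
    (hrQ : r ∈ Q) (hrQ' : r ∈ Q') :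
    ∃ c', EffDist star f c' Q Q' ∧ Nested star r c' ∧
      ∀ u, Nested star u r → Nested star u c → Nested star u c' := by
  have hrc : ¬ r ≤ c := fun hle => hx (Or.inl hle)
  have hrc' : ¬ r ≤ star c := fun hle => hx (Or.inr (Or.inl hle))
  rcases le_inf_or_le_inf_star_of_effDist h hfstar hPa hPb hrobA hrobB hr hrc hrc' with hle | hle
  · have hf : f (r ⊔ c) ≤ f c := by linarith [hfsub r c]
    exact ⟨r ⊔ c, ⟨hc.1.sup h hfstar hQ hQ' hrQ hrQ' hf hrc, fun v hv => hf.trans (hc.2 v hv)⟩,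
      Or.inl le_sup_left, fun u hur huc => hur.sup h huc hrc'⟩
  · have hf : f (r ⊔ star c) ≤ f c := by linarith [hfsub r (star c), hfstar c]
    refine ⟨r ⊔ star c, ⟨?_, fun v hv => hf.trans (hc.2 v hv)⟩, Or.inl le_sup_left,
      fun u hur huc => hur.sup h ((nested_star_right_iff_s6 h).2 huc) (by rwa [h.star_star])⟩
    exact ((distinguishes_star_iff h).2 hc.1).sup h hfstar hQ hQ' hrQ hrQ' (by rwa [hfstar]) hrc'

theorem exists_effDist_nested_of_not_nested (h : OrderReversingInvolution star)
    (hfstar : ∀ s, f (star s) = f s) (hfsub : ∀ r s : U, f (r ⊔ s) + f (r ⊓ s) ≤ f r + f s)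
    (hPa : IsProfileIn star f Pa) (hPb : IsProfileIn star f Pb)
    (hrobA : RobustProfile star f Pa) (hrobB : RobustProfile star f Pb)
    (hQ : IsProfileIn star f Q) (hQ' : IsProfileIn star f Q')
    (hr : EffDist star f r Pa Pb) (hc : EffDist star f c Q Q') (hrc : f r ≤ f c)
    (hx : ¬ Nested star r c) :
    ∃ c', EffDist star f c' Q Q' ∧ Nested star r c' ∧
      ∀ u, Nested star u r → Nested star u c → Nested star u c' := by
  by_cases hd : Distinguishes star r Q Q'
  · exact ⟨r, ⟨hd, fun v hv => hrc.trans (hc.2 v hv)⟩, Nested.refl r, fun u hur _ => hur⟩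
  obtain ⟨hrQ, hrQ'⟩ := hc.1.mem_or_star_mem_of_le hfstar hQ hQ' hrc
  have horient : (r ∈ Q ∧ r ∈ Q') ∨ (star r ∈ Q ∧ star r ∈ Q') := by
    unfold Distinguishes at hd
    tauto
  rcases horient with ⟨h1, h2⟩ | ⟨h1, h2⟩
  · exact exists_effDist_nested_of_mem h hfstar hfsub hPa hPb hrobA hrobB hQ hQ' hr hc hx h1 h2
  · obtain ⟨c', hc', hrc', hsub⟩ := exists_effDist_nested_of_mem h hfstar hfsub hPa hPb hrobA
      hrobB hQ hQ' ((effDist_star_iff h hfstar).2 hr) hc (by rwa [nested_star_left_iff_s6 h]) h1 h2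
    exact ⟨c', hc', (nested_star_left_iff_s6 h).1 hrc',
      fun u hur => hsub u ((nested_star_right_iff_s6 h).2 hur)⟩

theorem exists_effDist_forall_nested [Finite U] (h : OrderReversingInvolution star)
    (hfstar : ∀ s, f (star s) = f s) (hfsub : ∀ r s : U, f (r ⊔ s) + f (r ⊓ s) ≤ f r + f s)
    {Ps : Set (Set U)} (hprof : ∀ P ∈ Ps, IsProfileIn star f P)
    (hrobust : ∀ P ∈ Ps, RobustProfile star f P) {T : Set U}
    (hT : ∀ a ∈ T, ∀ b ∈ T, Nested star a b)
    (hTeff : ∀ t ∈ T, ∃ P ∈ Ps, ∃ P' ∈ Ps, EffDist star f t P P')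
    (hQ : IsProfileIn star f Q) (hQ' : IsProfileIn star f Q')
    (hTle : ∀ t ∈ T, ∀ v, Distinguishes star v Q Q' → f t ≤ f v)
    (hd : ∃ s, Distinguishes star s Q Q') :
    ∃ c, EffDist star f c Q Q' ∧ ∀ t ∈ T, Nested star t c := by
  obtain ⟨c, hc, hmin⟩ := Set.exists_min_image {v | EffDist star f v Q Q'}
    (fun v => {u ∈ T | ¬ Nested star u v}.ncard) (Set.toFinite _) (exists_effDist hd)
  refine ⟨c, hc, fun t ht => by_contra fun hx => ?_⟩
  obtain ⟨Pa, hPa, Pb, hPb, htab⟩ := hTeff t ht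
  obtain ⟨c', hc', htc', hsub⟩ := exists_effDist_nested_of_not_nested h hfstar hfsub
    (hprof Pa hPa) (hprof Pb hPb) (hrobust Pa hPa) (hrobust Pb hPb) hQ hQ' htab hc
    (hTle t ht c hc.1) hx
  have hfewer : {u ∈ T | ¬ Nested star u c'} ⊂ {u ∈ T | ¬ Nested star u c} := by
    have hle : {u ∈ T | ¬ Nested star u c'} ⊆ {u ∈ T | ¬ Nested star u c} :=
      fun u ⟨hu, hnc'⟩ => ⟨hu, fun huc => hnc' (hsub u (hT u hu t ht) huc)⟩
    exact (Set.ssubset_iff_of_subset hle).2 ⟨t, ⟨ht, hx⟩, fun htc => htc.2 htc'⟩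
  exact (hmin c' hc').not_gt (Set.ncard_lt_ncard hfewer)

end Uncrossing

section Greedy

variable [Lattice U] {star : U → U} {f : U → ℝ}

/-- The invariant of the greedy construction, whose last field records that pairs are handled in
increasing order of their efficient order. -/
structure IsPartialTangleTree (star : U → U) (f : U → ℝ) (Ps : Set (Set U)) (T : Set U) :
    Prop where
  nested : ∀ a ∈ T, ∀ b ∈ T, Nested star a b
  effDist : ∀ t ∈ T, ∃ P ∈ Ps, ∃ P' ∈ Ps, EffDist star f t P P'
  le_of_not_effDist : ∀ t ∈ T, ∀ P ∈ Ps, ∀ P' ∈ Ps, (∀ t' ∈ T, ¬ EffDist star f t' P P') →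
    ∀ v, Distinguishes star v P P' → f t ≤ f v

theorem isPartialTangleTree_empty (Ps : Set (Set U)) : IsPartialTangleTree star f Ps ∅ :=
  ⟨by simp, by simp, by simp⟩

theorem IsPartialTangleTree.exists_insert [Finite U] (h : OrderReversingInvolution star)
    (hfstar : ∀ s, f (star s) = f s) (hfsub : ∀ r s : U, f (r ⊔ s) + f (r ⊓ s) ≤ f r + f s)
    {Ps : Set (Set U)} (hprof : ∀ P ∈ Ps, IsProfileIn star f P)
    (hrobust : ∀ P ∈ Ps, RobustProfile star f P) {T : Set U}
    (hT : IsPartialTangleTree star f Ps T) {P P' : Set U} (hP : P ∈ Ps) (hP' : P' ∈ Ps)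
    (hd : ∃ s, Distinguishes star s P P') (hnew : ∀ t ∈ T, ¬ EffDist star f t P P') :
    ∃ c ∉ T, IsPartialTangleTree star f Ps (insert c T) := by
  obtain ⟨s, hs⟩ := hd
  obtain ⟨⟨⟨Q, Q'⟩, u⟩, ⟨hQ, hQ', hQnew, hu⟩, hmin⟩ := Set.exists_min_image
    {x : (Set U × Set U) × U | x.1.1 ∈ Ps ∧ x.1.2 ∈ Ps ∧ (∀ t ∈ T, ¬ EffDist star f t x.1.1 x.1.2) ∧
      Distinguishes star x.2 x.1.1 x.1.2}
    (fun x => f x.2) (Set.toFinite _) ⟨((P, P'), s), hP, hP', hnew, hs⟩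
  obtain ⟨c, hc, hcT⟩ := exists_effDist_forall_nested h hfstar hfsub hprof hrobust hT.nested
    hT.effDist (hprof Q hQ) (hprof Q' hQ') (fun t ht => hT.le_of_not_effDist t ht Q hQ Q' hQ' hQnew)
    ⟨u, hu⟩
  refine ⟨c, fun hcT' => hQnew c hcT' hc, ?_, ?_, ?_⟩
  · simp only [Set.forall_mem_insert]
    exact ⟨⟨Nested.refl c, fun b hb => (hcT b hb).symm h⟩, fun a ha => ⟨hcT a ha, hT.nested a ha⟩⟩
  · exact Set.forall_mem_insert.2 ⟨⟨Q, hQ, Q', hQ', hc⟩, hT.effDist⟩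
  · simp only [Set.forall_mem_insert]
    refine ⟨fun R hR R' hR' hRnew v hv => ?_, fun t ht R hR R' hR' hRnew =>
      hT.le_of_not_effDist t ht R hR R' hR' hRnew.2⟩
    exact (hc.2 u hu).trans (hmin ((R, R'), v) ⟨hR, hR', hRnew.2, hv⟩)

theorem exists_isPartialTangleTree_forall_effDist [Finite U] (h : OrderReversingInvolution star)
    (hfstar : ∀ s, f (star s) = f s) (hfsub : ∀ r s : U, f (r ⊔ s) + f (r ⊓ s) ≤ f r + f s)
    {Ps : Set (Set U)} (hprof : ∀ P ∈ Ps, IsProfileIn star f P)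
    (hrobust : ∀ P ∈ Ps, RobustProfile star f P) :
    ∃ T, IsPartialTangleTree star f Ps T ∧ ∀ P ∈ Ps, ∀ P' ∈ Ps,
      (∃ s, Distinguishes star s P P') → ∃ t ∈ T, EffDist star f t P P' := by
  obtain ⟨T, hT, hmax⟩ := Set.exists_max_image {T | IsPartialTangleTree star f Ps T} Set.ncard
    (Set.toFinite _) ⟨∅, isPartialTangleTree_empty Ps⟩
  refine ⟨T, hT, fun P hP P' hP' hd => by_contra fun hnew => ?_⟩
  obtain ⟨c, hcT, hc⟩ := hT.exists_insert h hfstar hfsub hprof hrobust hP hP' hd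
    fun t ht htP => hnew ⟨t, ht, htP⟩
  have := hmax _ hc
  rw [Set.ncard_insert_of_notMem hcT] at this
  omega

theorem Distinguishes.not_le_star (h : OrderReversingInvolution star) {Ps : Set (Set U)}
    (hreg : ∀ P ∈ Ps, ∀ s ∈ P, ¬ s ≤ star s) {P P' : Set U} (hP : P ∈ Ps) (hP' : P' ∈ Ps)
    {t : U} (ht : Distinguishes star t P P') : ¬ t ≤ star t ∧ ¬ star t ≤ t := by
  have hreg' : ∀ Q ∈ Ps, star t ∈ Q → ¬ star t ≤ t := fun Q hQ htQ => by
    simpa only [h.star_star] using hreg Q hQ _ htQ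
  rcases ht with ⟨htP, htP'⟩ | ⟨htP, htP'⟩
  · exact ⟨hreg P hP t htP, hreg' P' hP' htP'⟩
  · exact ⟨hreg P' hP' t htP', hreg' P hP htP⟩

theorem not_lt_star_of_lt (h : OrderReversingInvolution star) {r t : U} (hr : ¬ r ≤ star r)
    (hrt : r < t) : ¬ r < star t :=
  fun hrt' => hr (hrt.le.trans (h.le_star_comm_s6.1 hrt'.le))

end Greedy

theorem tangle_tree_submodular_universe_general [Lattice U] [Fintype U]
    (star : U → U) (hstar : OrderReversingInvolution star)
    (f : U → ℝ) (hfstar : ∀ s : U, f (star s) = f s)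
    (hfsub : ∀ r s : U, f (r ⊔ s) + f (r ⊓ s) ≤ f r + f s)
    (Ps : Set (Set U))
    (hprof : ∀ P ∈ Ps, IsProfileIn star f P)
    (hrobust : ∀ P ∈ Ps, RobustProfile star f P) :
    ∃ T : Set U,
      (∀ a ∈ T, ∀ b ∈ T, Nested star a b) ∧
      -- (i) every two distinguishable profiles in `Ps` are efficiently
      -- distinguished by some separation in `T`
      (∀ P ∈ Ps, ∀ P' ∈ Ps, (∃ s, Distinguishes star s P P') →
        ∃ t ∈ T, EffDist star f t P P') ∧
      -- (ii) every separation in `T` efficiently distinguishes a pair of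
      -- profiles in `Ps`
      (∀ t ∈ T, ∃ P ∈ Ps, ∃ P' ∈ Ps, EffDist star f t P P') ∧
      -- (iii) if all profiles in `Ps` are regular, then `T` is a regular
      -- tree set
      ((∀ P ∈ Ps, ∀ s ∈ P, ¬ s ≤ star s) →
        (∀ t ∈ T, ¬ t ≤ star t ∧ ¬ star t ≤ t) ∧
        (∀ r ∈ T, (¬ ∃ t ∈ T, r < t ∧ r < star t) ∧
                  (¬ ∃ t ∈ T, star r < t ∧ star r < star t))) := by
  obtain ⟨T, hT, hdist⟩ :=
    exists_isPartialTangleTree_forall_effDist hstar hfstar hfsub hprof hrobust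
  refine ⟨T, hT.nested, hdist, hT.effDist, fun hreg => ?_⟩
  have hregular : ∀ t ∈ T, ¬ t ≤ star t ∧ ¬ star t ≤ t := fun t ht =>
    let ⟨_, hP, _, hP', htP⟩ := hT.effDist t ht
    htP.1.not_le_star hstar hreg hP hP'
  refine ⟨hregular, fun r hr => ⟨?_, ?_⟩⟩
  · rintro ⟨t, -, hrt, hrt'⟩
    exact not_lt_star_of_lt hstar (hregular r hr).1 hrt hrt'
  · rintro ⟨t, -, hrt, hrt'⟩
    refine not_lt_star_of_lt hstar ?_ hrt hrt'
    rw [hstar.star_star]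
    exact (hregular r hr).2

/-- **Non-canonical tangle-tree theorem for submodular universes.** -/
theorem tangle_tree_submodular_universe [Lattice U] [Fintype U]
    (star : U → U) (hstar : OrderReversingInvolution star)
    (f : U → ℝ) (hf0 : ∀ s : U, 0 ≤ f s) (hfstar : ∀ s : U, f (star s) = f s)
    (hfsub : ∀ r s : U, f (r ⊔ s) + f (r ⊓ s) ≤ f r + f s)
    (Ps : Set (Set U))
    (hprof : ∀ P ∈ Ps, IsProfileIn star f P)
    (hrobust : ∀ P ∈ Ps, RobustProfile star f P) :
    ∃ T : Set U,
      (∀ a ∈ T, ∀ b ∈ T, Nested star a b) ∧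
      -- (i) every two distinguishable profiles in `Ps` are efficiently
      -- distinguished by some separation in `T`
      (∀ P ∈ Ps, ∀ P' ∈ Ps, (∃ s, Distinguishes star s P P') →
        ∃ t ∈ T, EffDist star f t P P') ∧
      -- (ii) every separation in `T` efficiently distinguishes a pair of
      -- profiles in `Ps`
      (∀ t ∈ T, ∃ P ∈ Ps, ∃ P' ∈ Ps, EffDist star f t P P') ∧
      -- (iii) if all profiles in `Ps` are regular, then `T` is a regular
      -- tree set
      ((∀ P ∈ Ps, ∀ s ∈ P, ¬ s ≤ star s) →
        (∀ t ∈ T, ¬ t ≤ star t ∧ ¬ star t ≤ t) ∧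
        (∀ r ∈ T, (¬ ∃ t ∈ T, r < t ∧ r < star t) ∧
                  (¬ ∃ t ∈ T, star r < t ∧ star r < star t))) :=
  tangle_tree_submodular_universe_general star hstar f hfstar hfsub Ps hprof hrobust
end
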